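/- arXiv:2509.00011 — 2 statements merged into one kernel-verified Lean document; each statement's English description precedes it below -/
import Mathlib

section
/- Let τᴸ be any valuation premium rate substituted for the contractual premium in computing policy values Vᴸ on basis (δᴸ,μᴸ) with Vᴸ(n)=S̄, and let πᴸ be the net premium rate on the same basis. Then Vᴸ(0) = -∫₀ⁿ φᴸ(r)(τᴸ(r) - πᴸ(r)) dr. -/
/-!
`Vᴸ - g` solves the linear equation `D' = (δᴸ + μᴸ) D + (τᴸ - πᴸ)`, in which the sum at risk `S`
cancels. Multiplying by the integrating factor `φᴸ` turns it into `(φᴸ D)' = φᴸ (τᴸ - πᴸ)`;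
integrating over `[0, n]` and using `D(n) = S̄ - S̄ = 0`, `D(0) = Vᴸ(0)` and `φᴸ(0) = 1` gives the claim.
-/

open Set intervalIntegral

section IntegratingFactor

variable {f : ℝ → ℝ} {a b : ℝ}

theorem continuousOn_exp_neg_integral (hab : a ≤ b) (hf : ContinuousOn f (Icc a b)) :
    ContinuousOn (fun t => Real.exp (-∫ r in a..t, f r)) (Icc a b) := by
  have hprim := continuousOn_primitive_interval (μ := MeasureTheory.volume)
    (hf.integrableOn_Icc.mono_set (uIcc_of_le hab).subset)
  rw [uIcc_of_le hab] at hprim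
  exact Real.continuous_exp.comp_continuousOn hprim.neg

theorem hasDerivAt_exp_neg_integral (hf : ContinuousOn f (Icc a b)) {t : ℝ} (ht : t ∈ Ioo a b) :
    HasDerivAt (fun s => Real.exp (-∫ r in a..s, f r))
      (-f t * Real.exp (-∫ r in a..t, f r)) t := by
  have hnhds : Icc a b ∈ nhds t := Icc_mem_nhds ht.1 ht.2
  have hint : IntervalIntegrable f MeasureTheory.volume a t :=
    (hf.mono (Icc_subset_Icc_right ht.2.le)).intervalIntegrable_of_Icc ht.1.le
  have hprim : HasDerivAt (fun s => ∫ r in a..s, f r) (f t) t :=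
    integral_hasDerivAt_right hint
      ⟨Icc a b, hnhds, hf.aestronglyMeasurable measurableSet_Icc⟩ (hf.continuousAt hnhds)
  simpa only [Pi.neg_apply, mul_comm] using hprim.neg.exp

theorem exp_neg_integral_mul_sub_eq_integral {D q : ℝ → ℝ} (hab : a ≤ b)
    (hf : ContinuousOn f (Icc a b)) (hq : ContinuousOn q (Icc a b))
    (hD : ContinuousOn D (Icc a b))
    (hD' : ∀ t ∈ Ioo a b, HasDerivAt D (f t * D t + q t) t) :
    Real.exp (-∫ r in a..b, f r) * D b - D a =
      ∫ t in a..b, Real.exp (-∫ r in a..t, f r) * q t := by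
  have hφ := continuousOn_exp_neg_integral hab hf
  have hderiv : ∀ t ∈ Ioo a b, HasDerivAt (fun s => Real.exp (-∫ r in a..s, f r) * D s)
      (Real.exp (-∫ r in a..t, f r) * q t) t := fun t ht =>
    ((hasDerivAt_exp_neg_integral hf ht).mul (hD' t ht)).congr_deriv (by ring)
  have hFTC := integral_eq_sub_of_hasDeriv_right_of_le hab (hφ.mul hD)
    (fun t ht => (hderiv t ht).hasDerivWithinAt) ((hφ.mul hq).intervalIntegrable_of_Icc hab)
  simpa using hFTC.symm

end IntegratingFactor

theorem initial_value_capitalizes_valuation_loadings_general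
    (n Sbar : ℝ) (hn : 0 < n)
    (δL μL τL πL S VL g : ℝ → ℝ)
    (hδ : ContinuousOn δL (Icc 0 n)) (hμ : ContinuousOn μL (Icc 0 n))
    (hτ : ContinuousOn τL (Icc 0 n)) (hπ : ContinuousOn πL (Icc 0 n))
    (φL : ℝ → ℝ)
    (hφ : ∀ t, φL t = Real.exp (-(∫ r in (0:ℝ)..t, (δL r + μL r))))
    -- the net premium rate πᴸ on the valuation basis
    (hgnet : ∀ t ∈ Icc (0:ℝ) n,
      HasDerivAt g (δL t * g t + πL t - μL t * (S t - g t)) t)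
    (hg0 : g 0 = 0) (hgn : g n = Sbar)
    -- Vᴸ : the Thiele solution with the valuation premium rate τᴸ and Vᴸ(n)=S̄
    (hVL : ∀ t ∈ Icc (0:ℝ) n,
      HasDerivAt VL (δL t * VL t + τL t - μL t * (S t - VL t)) t)
    (hVLn : VL n = Sbar) :
    VL 0 = -∫ r in (0:ℝ)..n, φL r * (τL r - πL r) := by
  have hdiff : ∀ t ∈ Icc (0:ℝ) n, HasDerivAt (fun s => VL s - g s)
      ((δL t + μL t) * (VL t - g t) + (τL t - πL t)) t := fun t ht =>
    ((hVL t ht).sub (hgnet t ht)).congr_deriv (by ring)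
  have hcapital := exp_neg_integral_mul_sub_eq_integral hn.le (hδ.add hμ) (hτ.sub hπ)
    (fun t ht => (hdiff t ht).continuousAt.continuousWithinAt)
    (fun t ht => hdiff t (Ioo_subset_Icc_self ht))
  simp only [hVLn, hgn, hg0, sub_self, mul_zero, zero_sub, sub_zero, Pi.add_apply,
    Pi.sub_apply] at hcapital
  simp only [hφ]
  linarith

/-- The initial policy value capitalizes the valuation premium loadings:
`Vᴸ(0) = -∫₀ⁿ φᴸ(r) (τᴸ(r) - πᴸ(r)) dr`. -/
theorem initial_value_capitalizes_valuation_loadings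
    (n Sbar : ℝ) (hn : 0 < n)
    (δL μL τL πL S VL g : ℝ → ℝ)
    (hδ : ContinuousOn δL (Icc 0 n)) (hμ : ContinuousOn μL (Icc 0 n))
    (hτ : ContinuousOn τL (Icc 0 n)) (hπ : ContinuousOn πL (Icc 0 n))
    (hS : ContinuousOn S (Icc 0 n))
    (φL : ℝ → ℝ)
    (hφ : ∀ t, φL t = Real.exp (-(∫ r in (0:ℝ)..t, (δL r + μL r))))
    -- the net premium rate πᴸ on the valuation basis
    (hgnet : ∀ t ∈ Icc (0:ℝ) n,
      HasDerivAt g (δL t * g t + πL t - μL t * (S t - g t)) t)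
    (hg0 : g 0 = 0) (hgn : g n = Sbar)
    -- Vᴸ : the Thiele solution with the valuation premium rate τᴸ and Vᴸ(n)=S̄
    (hVL : ∀ t ∈ Icc (0:ℝ) n,
      HasDerivAt VL (δL t * VL t + τL t - μL t * (S t - VL t)) t)
    (hVLn : VL n = Sbar) :
    VL 0 = -∫ r in (0:ℝ)..n, φL r * (τL r - πL r) :=
  initial_value_capitalizes_valuation_loadings_general n Sbar hn δL μL τL πL S VL g hδ hμ hτ hπ φL
    hφ hgnet hg0 hgn hVL hVLn
end

section
/- With valuation premium rate τᴸ and benefits (Sᴸ, S̄ᴸ) in the valuation actuarial basis, contractual cashflows with premium P=τᴹ and benefits (Sᴹ, S̄ᴹ), experience hazard μᴹ and discount vᴹ, define the augmented systematic component ĉ(t) = (δᴹ(t)-δᴸ(t))Vᴸ(t) - (μᴹ(t)-μᴸ(t))(Sᴸ(t)-Vᴸ(t)) + (τᴹ(t)-τᴸ(t)) - μᴹ(t)(Sᴹ(t)-Sᴸ(t)). Then the expected discounted surplus satisfies Θ̃(t) = -Vᴸ(0) + ∫₀ᵗ φᴹ(r) ĉ(r) dr for 0 ≤ t < n. -/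
/-!
Under the experience basis `T` has survival function `s = exp (-∫₀ μᴹ)`, hence density `μᴹ s`,
and `vᴹ s = φᴹ`. So the expected discounted premiums (by Fubini), death benefit (against the
density) and survival reserve are `∫₀ᵗ φᴹ τᴹ`, `∫₀ᵗ φᴹ μᴹ Sᴹ` and `φᴹ(t) Vᴸ(t)`. Integrating
`(φᴹ Vᴸ)' = -(δᴹ + μᴹ) φᴹ Vᴸ + φᴹ (Vᴸ)'` by parts and inserting Thiele's equation for `Vᴸ`
writes `φᴹ(t) Vᴸ(t) - Vᴸ(0)` as an integral, and collecting terms leaves exactly `φᴹ ĉ`.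
-/

open MeasureTheory Set

theorem hasDerivAt_exp_neg_integral_s13 {f : ℝ → ℝ} (hf : Continuous f) (x : ℝ) :
    HasDerivAt (fun y => Real.exp (-∫ r in (0:ℝ)..y, f r))
      (-(f x * Real.exp (-∫ r in (0:ℝ)..x, f r))) x := by
  have := (intervalIntegral.integral_hasDerivAt_right (hf.intervalIntegrable 0 x)
    (hf.stronglyMeasurableAtFilter _ _) hf.continuousAt).neg.exp
  simpa [mul_comm] using this

theorem continuous_exp_neg_integral {f : ℝ → ℝ} (hf : Continuous f) :
    Continuous fun y => Real.exp (-∫ r in (0:ℝ)..y, f r) :=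
  continuous_iff_continuousAt.2 fun x => (hasDerivAt_exp_neg_integral_s13 hf x).continuousAt

section Survival

variable {ν : Measure ℝ} [IsFiniteMeasure ν] {S f : ℝ → ℝ}

theorem nonneg_of_hasDerivAt_measureReal_Ioi (hν : ∀ x, ν.real (Ioi x) = S x)
    (hS : ∀ x, HasDerivAt S (-f x) x) (x : ℝ) : 0 ≤ f x := by
  have hanti : Antitone S := fun a b hab => by
    rw [← hν, ← hν]
    exact measureReal_mono (Ioi_subset_Ioi hab)
  exact neg_nonpos.1 ((hS x).nonpos_of_antitone hanti)

theorem eq_withDensity_of_hasDerivAt_measureReal_Ioi (hν : ∀ x, ν.real (Ioi x) = S x)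
    (hS : ∀ x, HasDerivAt S (-f x) x) (hf : Continuous f) :
    ν = volume.withDensity fun x => ENNReal.ofReal (f x) := by
  refine Measure.ext_of_Ioc _ _ fun a b hab => ?_
  have hFTC : ∫ x in a..b, f x = S a - S b := by
    rw [intervalIntegral.integral_eq_sub_of_hasDerivAt (f := -S)
      (fun x _ => by simpa using (hS x).neg) (hf.intervalIntegrable a b), Pi.neg_apply,
      Pi.neg_apply, neg_sub_neg]
  rw [withDensity_apply _ measurableSet_Ioc, ← ofReal_integral_eq_lintegral_ofReal
    hf.integrableOn_Ioc (ae_of_all _ (nonneg_of_hasDerivAt_measureReal_Ioi hν hS)),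
    ← intervalIntegral.integral_of_le hab.le, hFTC, ← hν, ← hν,
    ← measureReal_sdiff (Ioi_subset_Ioi hab.le) measurableSet_Ioi, Ioi_sdiff_Ioi,
    ofReal_measureReal]

end Survival

section Cashflow

variable {Ω : Type*} [MeasurableSpace Ω] {P : Measure Ω} [IsFiniteMeasure P] {T : Ω → ℝ}

theorem integrable_ite_lt_prod (hT : Measurable T) {g : ℝ → ℝ} {s : Set ℝ}
    (hg : IntegrableOn g s) :
    Integrable (fun p : Ω × ℝ => if p.2 < T p.1 then g p.2 else 0)
      (P.prod (volume.restrict s)) := by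
  have hU : MeasurableSet {p : Ω × ℝ | p.2 < T p.1} :=
    measurableSet_lt measurable_snd (hT.comp measurable_fst)
  refine ((hg.comp_snd P).indicator hU).congr (ae_of_all _ fun p => ?_)
  by_cases h : p.2 < T p.1 <;> simp [h]

theorem integral_intervalIntegral_ite_lt (hT : Measurable T) {g : ℝ → ℝ} (hg : Continuous g)
    {a b : ℝ} (hab : a ≤ b) :
    ∫ ω, (∫ r in a..b, if r < T ω then g r else 0) ∂P
      = ∫ r in a..b, P.real {ω | r < T ω} * g r := by
  simp only [intervalIntegral.integral_of_le hab]
  rw [integral_integral_swap (integrable_ite_lt_prod hT hg.integrableOn_Ioc)]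
  refine setIntegral_congr_fun measurableSet_Ioc fun r _ => ?_
  refine (integral_congr_ae (ae_of_all _ fun ω => ?_)).trans
    (integral_indicator_const (s := {ω | r < T ω}) (g r) (hT measurableSet_Ioi))
  by_cases h : r < T ω <;> simp [h]

variable {S f : ℝ → ℝ}

theorem integral_indicator_Ioc_comp (hT : Measurable T)
    (hν : ∀ x, (P.map T).real (Ioi x) = S x) (hS : ∀ x, HasDerivAt S (-f x) x)
    (hf : Continuous f) {g : ℝ → ℝ} (hg : Continuous g) {a b : ℝ} (hab : a ≤ b) :
    ∫ ω, (Ioc a b).indicator g (T ω) ∂P = ∫ r in a..b, f r * g r := by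
  rw [← integral_map hT.aemeasurable
      (hg.stronglyMeasurable.indicator measurableSet_Ioc).aestronglyMeasurable,
    eq_withDensity_of_hasDerivAt_measureReal_Ioi hν hS hf, integral_indicator measurableSet_Ioc,
    setIntegral_withDensity_eq_setIntegral_toReal_smul hf.measurable.ennreal_ofReal
      (ae_of_all _ fun _ => ENNReal.ofReal_lt_top) _ measurableSet_Ioc,
    intervalIntegral.integral_of_le hab]
  simp only [ENNReal.toReal_ofReal (nonneg_of_hasDerivAt_measureReal_Ioi hν hS _), smul_eq_mul]

theorem integral_premiums_sub_deathBenefit_sub_survivalValue (hT : Measurable T)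
    (hν : ∀ x, (P.map T).real (Ioi x) = S x) (hS : ∀ x, HasDerivAt S (-f x) x)
    (hf : Continuous f) {π b : ℝ → ℝ} (hπ : Continuous π) (hb : Continuous b) (c : ℝ)
    {t : ℝ} (ht : 0 ≤ t) :
    ∫ ω, ((∫ r in (0:ℝ)..t, if r < T ω then π r else 0) - (Ioc 0 t).indicator b (T ω)
        - {ω | t < T ω}.indicator (fun _ => c) ω) ∂P
      = (∫ r in (0:ℝ)..t, S r * π r) - (∫ r in (0:ℝ)..t, f r * b r) - S t * c := by
  have hP : ∀ x, P.real {ω | x < T ω} = S x := fun x => by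
    rw [← hν, map_measureReal_apply hT measurableSet_Ioi]; rfl
  have hπP : Integrable (fun ω => ∫ r in (0:ℝ)..t, if r < T ω then π r else 0) P := by
    simpa only [intervalIntegral.integral_of_le ht] using
      (integrable_ite_lt_prod hT hπ.integrableOn_Ioc).integral_prod_left
  have hbP : Integrable (fun ω => (Ioc 0 t).indicator b (T ω)) P :=
    ((hb.continuousOn.integrableOn_Icc.mono_set Ioc_subset_Icc_self).integrable_indicator
      measurableSet_Ioc).comp_measurable hT
  have hcP : Integrable ({ω | t < T ω}.indicator fun _ => c) P :=
    (integrable_const c).indicator (hT measurableSet_Ioi)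
  rw [integral_sub ?_ hcP, integral_sub hπP hbP,
    integral_intervalIntegral_ite_lt hT hπ ht, integral_indicator_Ioc_comp hT hν hS hf hb ht,
    integral_indicator_const (s := {ω | t < T ω}) _ (hT measurableSet_Ioi)]
  · simp only [hP, smul_eq_mul]
  · exact hπP.sub hbP

end Cashflow

theorem premium_sub_benefit_sub_reserve_eq_neg_reserve_zero_add_integral
    {φ δM μM δL μL τL τM SL SM VL chat : ℝ → ℝ} {t : ℝ} (ht : 0 ≤ t)
    (hφ : ∀ x, HasDerivAt φ (-((δM x + μM x) * φ x)) x) (hφ0 : φ 0 = 1)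
    (hVL : ∀ x ∈ Icc 0 t, HasDerivAt VL (δL x * VL x + τL x - μL x * (SL x - VL x)) x)
    (hchat : ∀ x, chat x = (δM x - δL x) * VL x - (μM x - μL x) * (SL x - VL x)
      + (τM x - τL x) - μM x * (SM x - SL x))
    (hδM : Continuous δM) (hμM : Continuous μM) (hδL : Continuous δL) (hμL : Continuous μL)
    (hτL : Continuous τL) (hτM : Continuous τM) (hSL : Continuous SL) (hSM : Continuous SM) :
    (∫ r in (0:ℝ)..t, φ r * τM r) - (∫ r in (0:ℝ)..t, φ r * (μM r * SM r)) - φ t * VL t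
      = -VL 0 + ∫ r in (0:ℝ)..t, φ r * chat r := by
  have hφ_cont : Continuous φ := continuous_iff_continuousAt.2 fun x => (hφ x).continuousAt
  have hVL_cont : ContinuousOn VL (uIcc 0 t) := fun x hx =>
    (hVL x (uIcc_of_le ht ▸ hx)).continuousAt.continuousWithinAt
  have hparts := intervalIntegral.integral_deriv_mul_eq_sub (fun x _ => hφ x)
    (fun x hx => hVL x (uIcc_of_le ht ▸ hx)) (Continuous.intervalIntegrable (by fun_prop) _ _)
    (ContinuousOn.intervalIntegrable (by fun_prop))
  have hpremium : IntervalIntegrable (fun r => φ r * τM r) volume 0 t :=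
    Continuous.intervalIntegrable (by fun_prop) _ _
  have hbenefit : IntervalIntegrable (fun r => φ r * (μM r * SM r)) volume 0 t :=
    Continuous.intervalIntegrable (by fun_prop) _ _
  have hreserve : IntervalIntegrable (fun r => -((δM r + μM r) * φ r) * VL r
      + φ r * (δL r * VL r + τL r - μL r * (SL r - VL r))) volume 0 t :=
    ContinuousOn.intervalIntegrable (by fun_prop)
  have hsplit : ∫ r in (0:ℝ)..t, φ r * chat r
      = (∫ r in (0:ℝ)..t, φ r * τM r) - (∫ r in (0:ℝ)..t, φ r * (μM r * SM r))
        - ∫ r in (0:ℝ)..t, -((δM r + μM r) * φ r) * VL r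
            + φ r * (δL r * VL r + τL r - μL r * (SL r - VL r)) := by
    rw [← intervalIntegral.integral_sub hpremium hbenefit,
      ← intervalIntegral.integral_sub (hpremium.sub hbenefit) hreserve]
    refine intervalIntegral.integral_congr fun r _ => ?_
    simp only [hchat]
    ring
  rw [hsplit, hparts, hφ0]
  ring

theorem three_basis_modeled_discounted_surplus_general
    {Ω : Type*} [m0 : MeasurableSpace Ω] (P : Measure Ω) [IsProbabilityMeasure P]
    (n : ℝ)
    (T : Ω → ℝ) (hT : Measurable T)
    (δL μL δM μM τL τM SL SM VL chat : ℝ → ℝ)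
    (hδL : Continuous δL) (hμL : Continuous μL)
    (hδM : Continuous δM) (hμM : Continuous μM)
    (hτL : Continuous τL) (hτM : Continuous τM)
    (hSL : Continuous SL) (hSM : Continuous SM)
    -- under the experience measure, T has hazard rate μᴹ
    (hTlaw : ∀ t : ℝ, P {ω | t < T ω}
      = ENNReal.ofReal (Real.exp (-(∫ r in (0:ℝ)..t, μM r))))
    (vM φM : ℝ → ℝ)
    (hvM : ∀ t, vM t = Real.exp (-(∫ r in (0:ℝ)..t, δM r)))
    (hφM : ∀ t, φM t = Real.exp (-(∫ r in (0:ℝ)..t, (δM r + μM r))))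
    -- Vᴸ solves Thiele's equation on the valuation actuarial basis with Vᴸ(n) = S̄ᴸ
    (hVL : ∀ t ∈ Icc (0:ℝ) n,
      HasDerivAt VL (δL t * VL t + τL t - μL t * (SL t - VL t)) t)
    -- augmented systematic component of surplus
    (hchat : ∀ t, chat t =
      (δM t - δL t) * VL t - (μM t - μL t) * (SL t - VL t)
      + (τM t - τL t) - μM t * (SM t - SL t))
    -- surplus Θ(t) = ∫₀ᵗ (vᴹ r / vᴹ t) dBᴹ(r) - 1_{T>t} Vᴸ(t)
    (Θ : ℝ → Ω → ℝ)
    (hΘ : ∀ t ω, Θ t ω =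
      (∫ r in (0:ℝ)..t, (vM r / vM t) * (if r < T ω then τM r else 0))
      - (if 0 < T ω ∧ T ω ≤ t then (vM (T ω) / vM t) * SM (T ω) else 0)
      - (if t < T ω then VL t else 0)) :
    ∀ t, 0 ≤ t → t < n →
      (∫ ω, vM t * Θ t ω ∂P) = -VL 0 + ∫ r in (0:ℝ)..t, φM r * chat r := by
  intro t ht0 htn
  set s : ℝ → ℝ := fun x => Real.exp (-∫ r in (0:ℝ)..x, μM r)
  have hs_cont : Continuous s := continuous_exp_neg_integral hμM
  have hvM_cont : Continuous vM := by rw [funext hvM]; exact continuous_exp_neg_integral hδM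
  have hφ : ∀ r, φM r = vM r * s r := fun r => by
    rw [hφM, hvM, intervalIntegral.integral_add (hδM.intervalIntegrable _ _)
      (hμM.intervalIntegrable _ _), neg_add, Real.exp_add]
  have hlaw : ∀ x, (P.map T).real (Ioi x) = s x := fun x => by
    rw [map_measureReal_apply hT measurableSet_Ioi, measureReal_def]
    exact (congrArg ENNReal.toReal (hTlaw x)).trans (ENNReal.toReal_ofReal (Real.exp_pos _).le)
  have hdecomp : ∀ ω, vM t * Θ t ω
      = (∫ r in (0:ℝ)..t, if r < T ω then vM r * τM r else 0)
        - (Ioc 0 t).indicator (fun r => vM r * SM r) (T ω)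
        - {ω | t < T ω}.indicator (fun _ => vM t * VL t) ω := by
    intro ω
    have hvt : vM t ≠ 0 := by rw [hvM]; exact (Real.exp_pos _).ne'
    rw [hΘ, mul_sub, mul_sub, ← intervalIntegral.integral_const_mul]
    simp only [mul_ite, mul_zero, ← mul_assoc, mul_div_cancel₀ _ hvt, indicator_apply, mem_Ioc,
      mem_ofPred_eq]
  rw [integral_congr_ae (ae_of_all _ hdecomp),
    integral_premiums_sub_deathBenefit_sub_survivalValue hT hlaw
      (hasDerivAt_exp_neg_integral_s13 hμM) (hμM.mul hs_cont)
      (π := fun r => vM r * τM r) (b := fun r => vM r * SM r) (by fun_prop) (by fun_prop) _ ht0]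
  refine Eq.trans ?_ (premium_sub_benefit_sub_reserve_eq_neg_reserve_zero_add_integral ht0
    (fun x => by rw [funext hφM]; exact hasDerivAt_exp_neg_integral_s13 (hδM.add hμM) x)
    (by simp [hφM]) (fun x hx => hVL x (Icc_subset_Icc le_rfl htn.le hx)) hchat
    hδM hμM hδL hμL hτL hτM hSL hSM)
  simp only [hφ]
  congr 1
  · congr 1 <;> exact intervalIntegral.integral_congr fun r _ => by ring
  · ring

/-- Three-actuarial-basis model: with valuation premium `τᴸ` and valuation
benefits `(Sᴸ, S̄ᴸ)`, contractual premium `P = τᴹ` and benefits `(Sᴹ, S̄ᴹ)`,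
the modeled discounted surplus satisfies
`Θ̃(t) = -Vᴸ(0) + ∫₀ᵗ φᴹ(r) ĉ(r) dr` for `0 ≤ t < n`, where `ĉ` is the
augmented systematic component. -/
theorem three_basis_modeled_discounted_surplus
    {Ω : Type*} [m0 : MeasurableSpace Ω] (P : Measure Ω) [IsProbabilityMeasure P]
    (n SbarL SbarM : ℝ) (hn : 0 < n)
    (T : Ω → ℝ) (hT : Measurable T) (hTnn : ∀ ω, 0 ≤ T ω)
    (δL μL δM μM τL τM SL SM VL chat : ℝ → ℝ)
    (hδL : Continuous δL) (hμL : Continuous μL)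
    (hδM : Continuous δM) (hμM : Continuous μM)
    (hτL : Continuous τL) (hτM : Continuous τM)
    (hSL : Continuous SL) (hSM : Continuous SM)
    -- under the experience measure, T has hazard rate μᴹ
    (hTlaw : ∀ t : ℝ, P {ω | t < T ω}
      = ENNReal.ofReal (Real.exp (-(∫ r in (0:ℝ)..t, μM r))))
    (vM φM : ℝ → ℝ)
    (hvM : ∀ t, vM t = Real.exp (-(∫ r in (0:ℝ)..t, δM r)))
    (hφM : ∀ t, φM t = Real.exp (-(∫ r in (0:ℝ)..t, (δM r + μM r))))
    -- Vᴸ solves Thiele's equation on the valuation actuarial basis with Vᴸ(n) = S̄ᴸ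
    (hVL : ∀ t ∈ Icc (0:ℝ) n,
      HasDerivAt VL (δL t * VL t + τL t - μL t * (SL t - VL t)) t)
    (hVLn : VL n = SbarL)
    -- augmented systematic component of surplus
    (hchat : ∀ t, chat t =
      (δM t - δL t) * VL t - (μM t - μL t) * (SL t - VL t)
      + (τM t - τL t) - μM t * (SM t - SL t))
    -- surplus Θ(t) = ∫₀ᵗ (vᴹ r / vᴹ t) dBᴹ(r) - 1_{T>t} Vᴸ(t)
    (Θ : ℝ → Ω → ℝ)
    (hΘ : ∀ t ω, Θ t ω =
      (∫ r in (0:ℝ)..t, (vM r / vM t) * (if r < T ω then τM r else 0))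
      - (if 0 < T ω ∧ T ω ≤ t then (vM (T ω) / vM t) * SM (T ω) else 0)
      - (if t < T ω then VL t else 0)) :
    ∀ t, 0 ≤ t → t < n →
      (∫ ω, vM t * Θ t ω ∂P) = -VL 0 + ∫ r in (0:ℝ)..t, φM r * chat r :=
  three_basis_modeled_discounted_surplus_general (m0 := m0) P n T hT δL μL δM μM τL τM SL SM VL chat
    hδL hμL hδM hμM hτL hτM hSL hSM hTlaw vM φM hvM hφM hVL hchat Θ hΘ
end
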